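/- For any graphs G and H, γ_gr(G ⊠ H) ≥ γ_gr(G)·γ_gr(H). -/

import Mathlib

open SimpleGraph

/-- The closed neighborhood of a vertex. -/
def closedNbhd {V : Type*} (G : SimpleGraph V) (v : V) : Set V :=
  insert v (G.neighborSet v)

/-- A legal (closed neighborhood) sequence: distinct vertices, each dominating
a vertex not dominated by its predecessors. -/
def IsLegalSeq {V : Type*} (G : SimpleGraph V) (l : List V) : Prop :=
  l.Nodup ∧ ∀ i : Fin l.length, ∃ u, u ∈ closedNbhd G (l.get i) ∧
    ∀ j : Fin l.length, (j : ℕ) < (i : ℕ) → u ∉ closedNbhd G (l.get j)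

/-- A dominating sequence: a legal sequence whose vertex set dominates the graph. -/
def IsDomSeq {V : Type*} (G : SimpleGraph V) (l : List V) : Prop :=
  IsLegalSeq G l ∧ ∀ v : V, ∃ u ∈ l, v ∈ closedNbhd G u

/-- The Grundy domination number: maximum length of a dominating sequence. -/
noncomputable def grundyDomNum {V : Type*} (G : SimpleGraph V) : ℕ :=
  sSup {n | ∃ l : List V, IsDomSeq G l ∧ l.length = n}

/-- A legal open neighborhood sequence. -/
def IsLegalOpenSeq {V : Type*} (G : SimpleGraph V) (l : List V) : Prop :=
  l.Nodup ∧ ∀ i : Fin l.length, ∃ u, u ∈ G.neighborSet (l.get i) ∧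
    ∀ j : Fin l.length, (j : ℕ) < (i : ℕ) → u ∉ G.neighborSet (l.get j)

/-- A total dominating sequence. -/
def IsTotalDomSeq {V : Type*} (G : SimpleGraph V) (l : List V) : Prop :=
  IsLegalOpenSeq G l ∧ ∀ v : V, ∃ u ∈ l, v ∈ G.neighborSet u

/-- The Grundy total domination number. -/
noncomputable def grundyTotalDomNum {V : Type*} (G : SimpleGraph V) : ℕ :=
  sSup {n | ∃ l : List V, IsTotalDomSeq G l ∧ l.length = n}

/-- The edge clique cover number: minimum size of a family of cliques covering all edges. -/
noncomputable def edgeCliqueCoverNum {V : Type*} (G : SimpleGraph V) : ℕ :=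
  sInf {n | ∃ C : Finset (Set V), C.card = n ∧ (∀ Q ∈ C, G.IsClique Q) ∧
    ∀ u v : V, G.Adj u v → ∃ Q ∈ C, u ∈ Q ∧ v ∈ Q}

/-- The independence number. -/
noncomputable def indepNum {V : Type*} (G : SimpleGraph V) : ℕ :=
  sSup {n | ∃ s : Finset V, (s : Set V).Pairwise (fun u v => ¬ G.Adj u v) ∧ s.card = n}

/-- The lexicographic product of simple graphs. -/
def lexProd {V W : Type*} (G : SimpleGraph V) (H : SimpleGraph W) : SimpleGraph (V × W) where
  Adj x y := G.Adj x.1 y.1 ∨ (x.1 = y.1 ∧ H.Adj x.2 y.2)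
  symm := by
    constructor
    rintro x y (h | ⟨e, h⟩)
    · exact Or.inl h.symm
    · exact Or.inr ⟨e.symm, h.symm⟩
  loopless := by
    constructor
    rintro x (h | ⟨_, h⟩)
    · exact G.loopless.irrefl _ h
    · exact H.loopless.irrefl _ h

/-- The strong product of simple graphs. -/
def strongProd {V W : Type*} (G : SimpleGraph V) (H : SimpleGraph W) : SimpleGraph (V × W) where
  Adj x y := x ≠ y ∧ (x.1 = y.1 ∨ G.Adj x.1 y.1) ∧ (x.2 = y.2 ∨ H.Adj x.2 y.2)
  symm := by
    constructor
    rintro x y ⟨hne, h1, h2⟩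
    refine ⟨hne.symm, ?_, ?_⟩
    · rcases h1 with h | h
      · exact Or.inl h.symm
      · exact Or.inr h.symm
    · rcases h2 with h | h
      · exact Or.inl h.symm
      · exact Or.inr h.symm
  loopless := ⟨fun x h => h.1 rfl⟩

/-- The direct (tensor) product of simple graphs. -/
def directProd {V W : Type*} (G : SimpleGraph V) (H : SimpleGraph W) : SimpleGraph (V × W) where
  Adj x y := G.Adj x.1 y.1 ∧ H.Adj x.2 y.2
  symm := ⟨fun _ _ h => ⟨h.1.symm, h.2.symm⟩⟩
  loopless := ⟨fun x h => G.loopless.irrefl _ h.1⟩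

/-- The boundary of a set of vertices. -/
def boundarySet {V : Type*} (G : SimpleGraph V) (S : Set V) : Set V :=
  {u | u ∉ S ∧ ∃ s ∈ S, G.Adj u s}

/-- `aVal G l` is the number of entries of `l` not adjacent to any earlier entry. -/
def aVal {V : Type*} (G : SimpleGraph V) [DecidableRel G.Adj] (l : List V) : ℕ :=
  (Finset.univ.filter (fun i : Fin l.length =>
    ∀ j : Fin l.length, (j : ℕ) < (i : ℕ) → ¬ G.Adj (l.get j) (l.get i))).card

/-!
If `(v₁, …, vₖ)` and `(w₁, …, wₗ)` are dominating sequences of `G` and `H` with footprints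
`xᵢ ∈ N[vᵢ]` and `yⱼ ∈ N[wⱼ]`, list the pairs `(vᵢ, wⱼ)` in lexicographic order. Since
`N[(v, w)] = N[v] × N[w]` in `G ⊠ H`, the vertex `(xᵢ, yⱼ)` is dominated by `(vᵢ, wⱼ)` but by no
earlier pair `(v_{i'}, w_{j'})`: either `i' < i` and `xᵢ ∉ N[v_{i'}]`, or `i' = i`, `j' < j` and
`yⱼ ∉ N[w_{j'}]`. So this is a dominating sequence of `G ⊠ H` of length `k · l`.
-/

lemma closedNbhd_strongProd {V W : Type*} (G : SimpleGraph V) (H : SimpleGraph W) (x : V × W) :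
    closedNbhd (strongProd G H) x = closedNbhd G x.1 ×ˢ closedNbhd H x.2 := by
  ext y
  simp only [closedNbhd, Set.mem_insert_iff, mem_neighborSet, strongProd, Set.mem_prod]
  grind [SimpleGraph.Adj.symm, Prod.ext_iff]

lemma Fin.divNat_lt_or_modNat_lt_of_lt {m n : ℕ} {j k : Fin (m * n)} (h : j < k) :
    j.divNat < k.divNat ∨ (j.divNat = k.divNat ∧ j.modNat < k.modNat) := by
  rw [Fin.lt_def] at h
  simp only [Fin.lt_def, Fin.ext_iff, Fin.coe_divNat, Fin.coe_modNat]
  rcases (Nat.div_le_div_right (c := n) h.le).lt_or_eq with hdiv | hdiv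
  · exact Or.inl hdiv
  · refine Or.inr ⟨hdiv, ?_⟩
    have hj := Nat.div_add_mod (j : ℕ) n
    have hk := Nat.div_add_mod (k : ℕ) n
    rw [hdiv] at hj
    omega

/-- Entry `i * m.length + j` is `(l[i], m[j])`: the pairs in lexicographic order of indices. -/
def lexProdSeq {α β : Type*} (l : List α) (m : List β) : List (α × β) :=
  List.ofFn fun k : Fin (l.length * m.length) => (l.get k.divNat, m.get k.modNat)

@[simp]
lemma length_lexProdSeq {α β : Type*} (l : List α) (m : List β) :
    (lexProdSeq l m).length = l.length * m.length := by
  simp [lexProdSeq]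

lemma mem_lexProdSeq {α β : Type*} {l : List α} {m : List β} {a : α} {b : β} :
    (a, b) ∈ lexProdSeq l m ↔ a ∈ l ∧ b ∈ m := by
  simp only [lexProdSeq, List.mem_ofFn, Prod.mk.injEq]
  constructor
  · rintro ⟨k, rfl, rfl⟩
    exact ⟨List.get_mem _ _, List.get_mem _ _⟩
  · rintro ⟨ha, hb⟩
    obtain ⟨i, rfl⟩ := List.mem_iff_get.mp ha
    obtain ⟨j, rfl⟩ := List.mem_iff_get.mp hb
    exact ⟨Fin.mkDivMod i j, by simp, by simp⟩

lemma isLegalSeq_ofFn {V : Type*} {G : SimpleGraph V} {n : ℕ} {f : Fin n → V}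
    (hf : Function.Injective f)
    (h : ∀ i, ∃ u ∈ closedNbhd G (f i), ∀ j < i, u ∉ closedNbhd G (f j)) :
    IsLegalSeq G (List.ofFn f) := by
  refine ⟨List.nodup_ofFn.mpr hf, fun i => ?_⟩
  obtain ⟨u, hu, hfirst⟩ := h (i.cast (List.length_ofFn))
  refine ⟨u, by rwa [List.get_ofFn], fun j hj => ?_⟩
  rw [List.get_ofFn]
  exact hfirst _ hj

section

variable {V W : Type*} {G : SimpleGraph V} {H : SimpleGraph W} {l : List V} {m : List W}

theorem IsLegalSeq.strongProd (hl : IsLegalSeq G l) (hm : IsLegalSeq H m) :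
    IsLegalSeq (strongProd G H) (lexProdSeq l m) := by
  refine isLegalSeq_ofFn (fun j k hjk => ?_) fun k => ?_
  · obtain ⟨hdiv, hmod⟩ := Prod.ext_iff.mp hjk
    rw [← Fin.divNat_mkDivMod_modNat j, ← Fin.divNat_mkDivMod_modNat k,
      List.nodup_iff_injective_get.mp hl.1 hdiv, List.nodup_iff_injective_get.mp hm.1 hmod]
  · obtain ⟨u, hu, hu_first⟩ := hl.2 k.divNat
    obtain ⟨w, hw, hw_first⟩ := hm.2 k.modNat
    refine ⟨(u, w), by rw [closedNbhd_strongProd]; exact ⟨hu, hw⟩, fun j hjk => ?_⟩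
    rw [closedNbhd_strongProd, Set.mem_prod, not_and_or]
    rcases Fin.divNat_lt_or_modNat_lt_of_lt hjk with hdiv | ⟨hdiv, hmod⟩
    · exact Or.inl (hu_first _ hdiv)
    · exact Or.inr (hw_first _ hmod)

theorem IsDomSeq.strongProd (hl : IsDomSeq G l) (hm : IsDomSeq H m) :
    IsDomSeq (strongProd G H) (lexProdSeq l m) := by
  refine ⟨hl.1.strongProd hm.1, fun x => ?_⟩
  obtain ⟨u, hu, hxu⟩ := hl.2 x.1
  obtain ⟨w, hw, hxw⟩ := hm.2 x.2
  exact ⟨(u, w), mem_lexProdSeq.mpr ⟨hu, hw⟩, by rw [closedNbhd_strongProd]; exact ⟨hxu, hxw⟩⟩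

end

lemma IsDomSeq.length_le_grundyDomNum {V : Type*} [Finite V] {G : SimpleGraph V} {l : List V}
    (hl : IsDomSeq G l) : l.length ≤ grundyDomNum G := by
  have := Fintype.ofFinite V
  refine le_csSup ⟨Fintype.card V, ?_⟩ ⟨l, hl, rfl⟩
  rintro n ⟨l', hl', rfl⟩
  exact hl'.1.1.length_le_card

lemma exists_isDomSeq_length_eq_grundyDomNum {V : Type*} {G : SimpleGraph V}
    (hG : grundyDomNum G ≠ 0) : ∃ l, IsDomSeq G l ∧ l.length = grundyDomNum G := by
  set S := {n | ∃ l : List V, IsDomSeq G l ∧ l.length = n}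
  have hne : S.Nonempty :=
    Set.nonempty_iff_ne_empty.mpr fun h => hG (by simp [grundyDomNum, S, h])
  have hbdd : BddAbove S := by
    by_contra h
    exact hG (by rw [grundyDomNum, csSup_of_not_bddAbove h, csSup_empty]; rfl)
  exact Nat.sSup_mem hne hbdd

theorem stmt_16 {V W : Type*} [Fintype V] [Fintype W]
    (G : SimpleGraph V) (H : SimpleGraph W) :
    grundyDomNum (strongProd G H) ≥ grundyDomNum G * grundyDomNum H := by
  rcases eq_or_ne (grundyDomNum G) 0 with hG | hG
  · simp [hG]
  rcases eq_or_ne (grundyDomNum H) 0 with hH | hH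
  · simp [hH]
  obtain ⟨l, hl, hl_len⟩ := exists_isDomSeq_length_eq_grundyDomNum hG
  obtain ⟨m, hm, hm_len⟩ := exists_isDomSeq_length_eq_grundyDomNum hH
  calc grundyDomNum G * grundyDomNum H = (lexProdSeq l m).length := by
        rw [length_lexProdSeq, hl_len, hm_len]
    _ ≤ grundyDomNum (strongProd G H) := (hl.strongProd hm).length_le_grundyDomNum
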